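/- (Correctness of the findRegion search) Let r ≥ 1, let a ≤ b in ℤ^r (componentwise), and let f be a predicate on ℤ^r that is upward closed within the box [a,b]: if a ≤ d ≤ d' ≤ b, f(d) holds, then f(d') holds. Then the breadth-first search that starts from the set K = {a}, repeatedly removes a degree d from K, skips it if it lies above an already-found degree in A, adds d to A if f(d) holds, and otherwise adds each d + e_i ≤ b to K, terminates, and its output A is exactly the set of minimal elements (with respect to the componentwise order) of { d ∈ ℤ^r : a ≤ d ≤ b and f(d) }. -/

import Mathlib

noncomputable section

open Classical in
/-- One step of the `findRegion` breadth-first search.  The state is a pair `(A, K)` of lists of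
multidegrees: `A` holds the degrees already found to satisfy `f`, and `K` is the queue of degrees
remaining to be checked (a FIFO queue, so degrees are visited in order of increasing total
degree).  A step removes the first element `d` of `K`; if `d` lies above an element of `A` it is
skipped; otherwise, if `f d` holds then `d` is added to `A`, and if not then every `d + eᵢ` that
is still `≤ b` is appended to the end of the queue. -/
def frStep {r : ℕ} (f : (Fin r → ℤ) → Prop) (b : Fin r → ℤ) :
    List (Fin r → ℤ) × List (Fin r → ℤ) → List (Fin r → ℤ) × List (Fin r → ℤ)
  | (A, []) => (A, [])
  | (A, d :: K) =>
    if ∃ α ∈ A, α ≤ d then (A, K)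
    else if f d then (d :: A, K)
    else (A, K ++ (List.finRange r).filterMap (fun i =>
      if d + Pi.single i 1 ≤ b then some (d + Pi.single i 1) else none))

/-!
Every found degree is minimal because the queue is processed level by level: when the head `d` is
found, any point of the region below `d` lies above a minimal point, which is either found
already (so `d` would have been skipped) or lies above a queued degree, whose total degree is at
least that of `d`. Conversely each minimal point `m` stays above some queued degree until it is
found: a skipped `d ≤ m` sits above a found minimal point, hence equals `m`; an expanded `d < m`
has a successor `d + eᵢ ≤ m`.
-/
section TotalDegree

variable {ι : Type*} [Fintype ι]

def totalDegree (d : ι → ℤ) : ℤ := ∑ i, d i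

theorem totalDegree_strictMono : StrictMono (totalDegree : (ι → ℤ) → ℤ) := fun _ _ h => by
  obtain ⟨hle, i, hi⟩ := Pi.lt_def.1 h
  exact Finset.sum_lt_sum (fun j _ => hle j) ⟨i, Finset.mem_univ i, hi⟩

theorem eq_of_le_of_totalDegree_le {x y : ι → ℤ} (h : x ≤ y)
    (h' : totalDegree y ≤ totalDegree x) : x = y :=
  by_contra fun hne => (totalDegree_strictMono (h.lt_of_ne hne)).not_ge h'

def LevelOrdered (K : List (ι → ℤ)) : Prop :=
  K.Pairwise fun x y => totalDegree x ≤ totalDegree y ∧ totalDegree y ≤ totalDegree x + 1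

theorem LevelOrdered.tail {d : ι → ℤ} {K : List (ι → ℤ)} (h : LevelOrdered (d :: K)) :
    LevelOrdered K :=
  List.Pairwise.of_cons h

theorem LevelOrdered.totalDegree_head_le {d x : ι → ℤ} {K : List (ι → ℤ)}
    (h : LevelOrdered (d :: K)) (hx : x ∈ d :: K) : totalDegree d ≤ totalDegree x := by
  rcases List.mem_cons.1 hx with rfl | hx
  · exact le_rfl
  · exact (List.rel_of_pairwise_cons h hx).1

theorem LevelOrdered.append_of_cons {d : ι → ℤ} {K L : List (ι → ℤ)} (h : LevelOrdered (d :: K))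
    (hL : ∀ s ∈ L, totalDegree s = totalDegree d + 1) : LevelOrdered (K ++ L) := by
  refine List.pairwise_append.2 ⟨h.tail, ?_, fun x hx s hs => ?_⟩
  · exact List.pairwise_of_forall_mem_list fun x hx y hy => by simp [hL x hx, hL y hy]
  · have := List.rel_of_pairwise_cons h hx
    have := hL s hs
    constructor <;> omega

variable [DecidableEq ι]

theorem totalDegree_add_single (d : ι → ℤ) (i : ι) :
    totalDegree (d + Pi.single i 1) = totalDegree d + 1 := by
  simp [totalDegree, Finset.sum_add_distrib]

end TotalDegree

theorem exists_add_single_le_of_lt {ι : Type*} [DecidableEq ι] {d m : ι → ℤ} (h : d < m) :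
    ∃ i, d + Pi.single i 1 ≤ m := by
  obtain ⟨hle, i, hi⟩ := Pi.lt_def.1 h
  refine ⟨i, fun j => ?_⟩
  rcases eq_or_ne j i with rfl | hj
  · simpa using hi
  · simpa [hj] using hle j

section FindRegion

variable {r : ℕ} (a b : Fin r → ℤ) (f : (Fin r → ℤ) → Prop)

open Classical in
def upSteps (d : Fin r → ℤ) : List (Fin r → ℤ) :=
  (List.finRange r).filterMap fun i =>
    if d + Pi.single i 1 ≤ b then some (d + Pi.single i 1) else none

theorem mem_upSteps {d s : Fin r → ℤ} :
    s ∈ upSteps b d ↔ ∃ i, s = d + Pi.single i 1 ∧ s ≤ b := by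
  simp only [upSteps, List.mem_filterMap, List.mem_finRange, true_and,
    Option.ite_none_right_eq_some, Option.some.injEq]
  constructor
  · rintro ⟨i, hb, rfl⟩; exact ⟨i, rfl, hb⟩
  · rintro ⟨i, rfl, hb⟩; exact ⟨i, hb, rfl⟩

theorem length_upSteps_le (d : Fin r → ℤ) : (upSteps b d).length ≤ r := by
  unfold upSteps
  exact (List.length_filterMap_le _ _).trans_eq (List.length_finRange)

section frStep

variable {a b f} {A K : List (Fin r → ℤ)} {d : Fin r → ℤ}

theorem frStep_of_exists_le (h : ∃ α ∈ A, α ≤ d) : frStep f b (A, d :: K) = (A, K) := by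
  simp [frStep, h]

theorem frStep_of_found (h : ¬∃ α ∈ A, α ≤ d) (hd : f d) :
    frStep f b (A, d :: K) = (d :: A, K) := by
  rw [frStep, if_neg h, if_pos hd]

theorem frStep_of_not_found (h : ¬∃ α ∈ A, α ≤ d) (hd : ¬f d) :
    frStep f b (A, d :: K) = (A, K ++ upSteps b d) := by
  rw [frStep, if_neg h, if_neg hd, upSteps]

end frStep

/-! A queued `d` weighs `(r + 1) ^ (totalDegree b - totalDegree d)`, so its at most `r`
successors, one level higher, together weigh less than `d` itself. -/

def weight (d : Fin r → ℤ) : ℕ := (r + 1) ^ (totalDegree b - totalDegree d).toNat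

def queueWeight (K : List (Fin r → ℤ)) : ℕ := (K.map (weight b)).sum

theorem weight_pos (d : Fin r → ℤ) : 0 < weight b d := by
  unfold weight; positivity

theorem succ_mul_weight_of_mem_upSteps {d s : Fin r → ℤ} (hs : s ∈ upSteps b d) :
    (r + 1) * weight b s = weight b d := by
  obtain ⟨i, rfl, hsb⟩ := (mem_upSteps b).1 hs
  have hlt := totalDegree_strictMono.monotone hsb
  rw [totalDegree_add_single] at hlt
  rw [weight, weight, totalDegree_add_single, ← pow_succ']
  congr 1
  omega

theorem queueWeight_upSteps_lt (d : Fin r → ℤ) : queueWeight b (upSteps b d) < weight b d := by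
  have h : (r + 1) * queueWeight b (upSteps b d) ≤ r * weight b d :=
    calc (r + 1) * queueWeight b (upSteps b d)
        = ((upSteps b d).map fun s => (r + 1) * weight b s).sum :=
          (List.sum_map_mul_left _ _ _).symm
      _ ≤ (upSteps b d).length * weight b d := by
          refine (List.sum_le_card_nsmul _ (weight b d) fun w hw => ?_).trans_eq (by simp)
          obtain ⟨s, hs, rfl⟩ := List.mem_map.1 hw
          exact (succ_mul_weight_of_mem_upSteps b hs).le
      _ ≤ r * weight b d := Nat.mul_le_mul_right _ (length_upSteps_le b d)
  nlinarith [weight_pos b d]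

theorem queueWeight_frStep_lt {st : List (Fin r → ℤ) × List (Fin r → ℤ)} (hst : st.2 ≠ []) :
    queueWeight b (frStep f b st).2 < queueWeight b st.2 := by
  obtain ⟨A, _ | ⟨d, K⟩⟩ := st
  · exact absurd rfl hst
  have hd := weight_pos b d
  by_cases h : ∃ α ∈ A, α ≤ d
  · simpa [frStep_of_exists_le h, queueWeight] using hd
  by_cases hfd : f d
  · simpa [frStep_of_found h hfd, queueWeight] using hd
  · have := queueWeight_upSteps_lt b d
    simp only [frStep_of_not_found h hfd, queueWeight, List.map_append, List.sum_append,
      List.map_cons, List.sum_cons] at this ⊢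
    omega

theorem exists_iterate_frStep_eq_nil (st : List (Fin r → ℤ) × List (Fin r → ℤ)) :
    ∃ N, ((frStep f b)^[N] st).2 = [] := by
  induction hn : queueWeight b st.2 using Nat.strong_induction_on generalizing st with
  | _ n ih =>
    by_cases hst : st.2 = []
    · exact ⟨0, hst⟩
    obtain ⟨N, hN⟩ := ih _ (hn ▸ queueWeight_frStep_lt b f hst) (frStep f b st) rfl
    exact ⟨N + 1, hN⟩

def region (x : Fin r → ℤ) : Prop := a ≤ x ∧ x ≤ b ∧ f x

theorem exists_minimal_region_le {y : Fin r → ℤ} (hy : region a b f y) :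
    ∃ m ≤ y, Minimal (region a b f) m :=
  ((Set.finite_Icc a b).subset fun _ hx => ⟨hx.1, hx.2.1⟩).exists_le_minimal
    (s := {x | region a b f x}) hy

structure Invariant (A K : List (Fin r → ℤ)) : Prop where
  minimal_of_mem : ∀ α ∈ A, Minimal (region a b f) α
  le_of_mem_queue : ∀ d ∈ K, a ≤ d ∧ d ≤ b
  levelOrdered : LevelOrdered K
  covers : ∀ m, Minimal (region a b f) m → m ∈ A ∨ ∃ d ∈ K, d ≤ m

variable {a b f}

theorem invariant_init (hab : a ≤ b) : Invariant a b f [] [a] where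
  minimal_of_mem := by simp
  le_of_mem_queue := by simpa using hab
  levelOrdered := List.pairwise_singleton _ _
  covers m hm := Or.inr ⟨a, List.mem_singleton_self a, hm.1.1⟩

theorem Invariant.minimal_head {A K : List (Fin r → ℤ)} {d : Fin r → ℤ}
    (h : Invariant a b f A (d :: K)) (hd : region a b f d) (hA : ¬∃ α ∈ A, α ≤ d) :
    Minimal (region a b f) d := by
  refine ⟨hd, fun y hy hyd => ?_⟩
  obtain ⟨m, hmy, hm⟩ := exists_minimal_region_le a b f hy
  rcases h.covers m hm with hmA | ⟨d', hd', hd'm⟩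
  · exact absurd ⟨m, hmA, hmy.trans hyd⟩ hA
  · have := h.levelOrdered.totalDegree_head_le hd'
    have := totalDegree_strictMono.monotone (hd'm.trans hmy)
    exact (eq_of_le_of_totalDegree_le hyd (by omega)).ge

section step

variable {A K : List (Fin r → ℤ)} {d : Fin r → ℤ}

theorem Invariant.step_of_exists_le (h : Invariant a b f A (d :: K)) (hA : ∃ α ∈ A, α ≤ d) :
    Invariant a b f A K := by
  refine ⟨h.minimal_of_mem, fun x hx => h.le_of_mem_queue x (.tail _ hx), h.levelOrdered.tail,
    fun m hm => ?_⟩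
  rcases h.covers m hm with hmA | ⟨d', hd', hd'm⟩
  · exact Or.inl hmA
  rcases List.mem_cons.1 hd' with rfl | hd'
  · obtain ⟨α, hαA, hαd⟩ := hA
    exact Or.inl (hm.eq_of_le (h.minimal_of_mem α hαA).1 (hαd.trans hd'm) ▸ hαA)
  · exact Or.inr ⟨d', hd', hd'm⟩

theorem Invariant.step_of_found (h : Invariant a b f A (d :: K)) (hA : ¬∃ α ∈ A, α ≤ d)
    (hfd : f d) : Invariant a b f (d :: A) K := by
  have hdab := h.le_of_mem_queue d List.mem_cons_self
  have hdmin := h.minimal_head ⟨hdab.1, hdab.2, hfd⟩ hA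
  refine ⟨?_, fun x hx => h.le_of_mem_queue x (.tail _ hx), h.levelOrdered.tail, fun m hm => ?_⟩
  · simpa using ⟨hdmin, h.minimal_of_mem⟩
  rcases h.covers m hm with hmA | ⟨d', hd', hd'm⟩
  · exact Or.inl (List.mem_cons_of_mem _ hmA)
  rcases List.mem_cons.1 hd' with rfl | hd'
  · exact Or.inl (hm.eq_of_le hdmin.1 hd'm ▸ List.mem_cons_self)
  · exact Or.inr ⟨d', hd', hd'm⟩

theorem Invariant.step_of_not_found (h : Invariant a b f A (d :: K)) (hfd : ¬f d) :
    Invariant a b f A (K ++ upSteps b d) := by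
  refine ⟨h.minimal_of_mem, fun x hx => ?_, h.levelOrdered.append_of_cons fun s hs => ?_,
    fun m hm => ?_⟩
  · rcases List.mem_append.1 hx with hx | hx
    · exact h.le_of_mem_queue x (.tail _ hx)
    obtain ⟨i, rfl, hxb⟩ := (mem_upSteps b).1 hx
    have had := (h.le_of_mem_queue d List.mem_cons_self).1
    exact ⟨had.trans (le_add_of_nonneg_right (Pi.single_nonneg.2 zero_le_one)), hxb⟩
  · obtain ⟨i, rfl, -⟩ := (mem_upSteps b).1 hs
    exact totalDegree_add_single d i
  rcases h.covers m hm with hmA | ⟨d', hd', hd'm⟩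
  · exact Or.inl hmA
  rcases List.mem_cons.1 hd' with rfl | hd'
  · have hlt : d' < m := hd'm.lt_of_ne (by rintro rfl; exact hfd hm.1.2.2)
    obtain ⟨i, hi⟩ := exists_add_single_le_of_lt hlt
    exact Or.inr ⟨_, List.mem_append_right _ ((mem_upSteps b).2 ⟨i, rfl, hi.trans hm.1.2.1⟩), hi⟩
  · exact Or.inr ⟨d', List.mem_append_left _ hd', hd'm⟩

end step

theorem Invariant.step {A K : List (Fin r → ℤ)} (h : Invariant a b f A K) :
    Invariant a b f (frStep f b (A, K)).1 (frStep f b (A, K)).2 := by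
  rcases K with _ | ⟨d, K⟩
  · exact h
  by_cases hA : ∃ α ∈ A, α ≤ d
  · rw [frStep_of_exists_le hA]; exact h.step_of_exists_le hA
  by_cases hfd : f d
  · rw [frStep_of_found hA hfd]; exact h.step_of_found hA hfd
  · rw [frStep_of_not_found hA hfd]; exact h.step_of_not_found hfd

theorem Invariant.iterate {st : List (Fin r → ℤ) × List (Fin r → ℤ)}
    (h : Invariant a b f st.1 st.2) (N : ℕ) :
    Invariant a b f ((frStep f b)^[N] st).1 ((frStep f b)^[N] st).2 := by
  induction N with
  | zero => exact h
  | succ N ih => rw [Function.iterate_succ_apply']; exact ih.step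

end FindRegion

theorem findRegion_correct_general {r : ℕ} (a b : Fin r → ℤ) (hab : a ≤ b)
    (f : (Fin r → ℤ) → Prop) :
    ∃ N : ℕ, ((frStep f b)^[N] ([], [a])).2 = [] ∧
      ∀ d : Fin r → ℤ, d ∈ ((frStep f b)^[N] ([], [a])).1 ↔
        Minimal (fun x => a ≤ x ∧ x ≤ b ∧ f x) d := by
  obtain ⟨N, hN⟩ := exists_iterate_frStep_eq_nil b f ([], [a])
  have h := (invariant_init (f := f) hab).iterate (st := ([], [a])) N
  refine ⟨N, hN, fun d => ⟨h.minimal_of_mem d, fun hd => ?_⟩⟩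
  simpa [hN] using h.covers d hd

/-- (Correctness of the `findRegion` search)  Let `r ≥ 1`, let `a ≤ b` in `ℤ^r`
(componentwise) and let `f` be a predicate on `ℤ^r` that is upward closed within the box
`[a, b]`.  Then the breadth-first search starting from the state `(A, K) = ([], [a])` terminates,
and its output `A` is exactly the set of minimal elements (for the componentwise order) of
`{ d : a ≤ d ≤ b and f d }`. -/
theorem findRegion_correct {r : ℕ} (hr : 1 ≤ r) (a b : Fin r → ℤ) (hab : a ≤ b)
    (f : (Fin r → ℤ) → Prop)
    (hup : ∀ d d' : Fin r → ℤ, a ≤ d → d ≤ d' → d' ≤ b → f d → f d') :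
    ∃ N : ℕ, ((frStep f b)^[N] ([], [a])).2 = [] ∧
      ∀ d : Fin r → ℤ, d ∈ ((frStep f b)^[N] ([], [a])).1 ↔
        Minimal (fun x => a ≤ x ∧ x ≤ b ∧ f x) d :=
  findRegion_correct_general a b hab f

end
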